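/- Let B₀ be a complete discrete valuation ring with uniformizer π. Let V → W → Q → 0 be an exact sequence of B₀-modules where V is π-adically complete, W is π-adically separated (⋂ₙ πⁿW = 0), and Q ⊗_{B₀} (B₀/πB₀) is finitely generated. Then Q is a finitely generated B₀-module. -/

import Mathlib

/-!
Lift generators of `Q/πQ` to `w₁, …, wₙ ∈ W`. Exactness shows that `(a, v) ↦ ∑ aᵢ wᵢ + φ v`
maps `B₀ⁿ × V` onto `W` modulo `πW`; as its source is `π`-adically complete and `W` is separated,
successive approximation makes it surjective, so the `ψ wᵢ` generate `Q`.
-/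

open Function Pointwise Submodule

variable {R : Type*} [CommRing R] {I : Ideal R}
variable {M N : Type*} [AddCommGroup M] [Module R M] [AddCommGroup N] [Module R N]

theorem SModEq.map_smul_top {J : Ideal R} {x y : M} (h : x ≡ y [SMOD (J • ⊤ : Submodule R M)])
    (f : M →ₗ[R] N) : f x ≡ f y [SMOD (J • ⊤ : Submodule R N)] :=
  (h.map f).mono (map_le_iff_le_comap.mpr (smul_top_le_comap_smul_top J f))

instance IsPrecomplete.prod [IsPrecomplete I M] [IsPrecomplete I N] :
    IsPrecomplete I (M × N) where
  prec' f hf := by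
    obtain ⟨a, ha⟩ := IsPrecomplete.prec ‹_› (f := fun n ↦ (f n).1)
      fun h ↦ (hf h).map_smul_top (LinearMap.fst R M N)
    obtain ⟨b, hb⟩ := IsPrecomplete.prec ‹_› (f := fun n ↦ (f n).2)
      fun h ↦ (hf h).map_smul_top (LinearMap.snd R M N)
    refine ⟨(a, b), fun n ↦ ?_⟩
    simpa using ((ha n).map_smul_top (LinearMap.inl R M N)).add
      ((hb n).map_smul_top (LinearMap.inr R M N))

instance IsPrecomplete.pi {ι : Type*} [Finite ι] {E : ι → Type*} [∀ i, AddCommGroup (E i)]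
    [∀ i, Module R (E i)] [∀ i, IsPrecomplete I (E i)] : IsPrecomplete I (∀ i, E i) where
  prec' f hf := by
    classical
    choose a ha using fun i ↦ IsPrecomplete.prec inferInstance (f := fun n ↦ f n i)
      fun h ↦ (hf h).map_smul_top (LinearMap.proj i)
    have := Fintype.ofFinite ι
    refine ⟨a, fun n ↦ ?_⟩
    rw [← Finset.univ_sum_single (f n), ← Finset.univ_sum_single a]
    exact SModEq.sum fun i _ ↦ (ha i n).map_smul_top (LinearMap.single R E i)

section Exact

variable {V W Q F : Type*} [AddCommGroup V] [Module R V] [AddCommGroup W] [Module R W]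
  [AddCommGroup Q] [Module R Q] [AddCommGroup F] [Module R F]
  {φ : V →ₗ[R] W} {ψ : W →ₗ[R] Q}

theorem surjective_mkQ_comp_coprod_of_exact (hψ : Surjective ψ) (hexact : Exact φ ψ)
    (g : F →ₗ[R] W) (hg : Surjective ((I • ⊤ : Submodule R Q).mkQ ∘ₗ ψ ∘ₗ g)) :
    Surjective ((I • ⊤ : Submodule R W).mkQ ∘ₗ g.coprod φ) := by
  intro x
  obtain ⟨w, rfl⟩ := mkQ_surjective _ x
  obtain ⟨a, ha⟩ := hg (Submodule.Quotient.mk (ψ w))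
  have hmem : ψ w - ψ (g a) ∈ map ψ (I • ⊤) := by
    rw [map_smul'', Submodule.map_top, LinearMap.range_eq_top.mpr hψ]
    exact (Submodule.Quotient.eq _).mp ha.symm
  obtain ⟨w', hw', hψw'⟩ := hmem
  obtain ⟨v, hv⟩ := (hexact (w - g a - w')).mp (by simp [hψw'])
  refine ⟨(a, v), ?_⟩
  simp only [LinearMap.coe_comp, comp_apply, LinearMap.coprod_apply, mkQ_apply, hv,
    Submodule.Quotient.eq]
  convert neg_mem hw' using 1
  abel

theorem Module.Finite.of_exact_of_isPrecomplete [IsPrecomplete I R] [IsPrecomplete I V]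
    [IsHausdorff I W] [Module.Finite R (Q ⧸ (I • ⊤ : Submodule R Q))]
    (hψ : Surjective ψ) (hexact : Exact φ ψ) : Module.Finite R Q := by
  obtain ⟨n, q, hq⟩ := Module.Finite.exists_fin (R := R) (M := Q ⧸ (I • ⊤ : Submodule R Q))
  choose w hw using fun i ↦ ((mkQ_surjective _).comp hψ) (q i)
  let g := Fintype.linearCombination R w
  have hg : Surjective ((I • ⊤ : Submodule R Q).mkQ ∘ₗ ψ ∘ₗ g) := by
    rw [← LinearMap.range_eq_top, eq_top_iff, ← hq, span_le]
    rintro _ ⟨i, rfl⟩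
    exact ⟨Pi.single i 1, by simp [g, ← hw i]⟩
  have hsurj : Surjective (g.coprod φ) :=
    surjective_of_mkQ_comp_surjective (surjective_mkQ_comp_coprod_of_exact hψ hexact g hg)
  refine Module.Finite.of_surjective (ψ ∘ₗ g) fun y ↦ ?_
  obtain ⟨w₀, rfl⟩ := hψ y
  obtain ⟨⟨a, v⟩, rfl⟩ := hsurj w₀
  exact ⟨a, by simp [hexact.apply_apply_eq_zero]⟩

end Exact

theorem statement7_general (B₀ : Type) [CommRing B₀]
    (π : B₀)
    [IsAdicComplete (Ideal.span {π}) B₀]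
    (V W Q : Type) [AddCommGroup V] [Module B₀ V] [AddCommGroup W] [Module B₀ W]
    [AddCommGroup Q] [Module B₀ Q]
    [IsAdicComplete (Ideal.span {π}) V] [IsHausdorff (Ideal.span {π}) W]
    (φ : V →ₗ[B₀] W) (ψ : W →ₗ[B₀] Q)
    (hsurj : Surjective ψ) (hexact : LinearMap.range φ = LinearMap.ker ψ)
    (hfg : Module.Finite B₀ (Q ⧸ (π • (⊤ : Submodule B₀ Q)))) :
    Module.Finite B₀ Q := by
  rw [← ideal_span_singleton_smul] at hfg
  exact Module.Finite.of_exact_of_isPrecomplete (I := Ideal.span {π}) hsurj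
    (LinearMap.exact_iff.mpr hexact.symm)

/-- Let `B₀` be a complete discrete valuation ring with uniformizer `π`.
Let `V → W → Q → 0` be an exact sequence of `B₀`-modules, with `V` `π`-adically complete,
`W` `π`-adically separated, and `Q ⊗ (B₀/πB₀) = Q/πQ` finitely generated.  Then `Q` is a
finitely generated `B₀`-module. -/
theorem statement7 (B₀ : Type) [CommRing B₀] [IsDomain B₀] [IsDiscreteValuationRing B₀]
    (π : B₀) (hπ : Irreducible π)
    [IsAdicComplete (Ideal.span {π}) B₀]
    (V W Q : Type) [AddCommGroup V] [Module B₀ V] [AddCommGroup W] [Module B₀ W]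
    [AddCommGroup Q] [Module B₀ Q]
    [IsAdicComplete (Ideal.span {π}) V] [IsHausdorff (Ideal.span {π}) W]
    (φ : V →ₗ[B₀] W) (ψ : W →ₗ[B₀] Q)
    (hsurj : Surjective ψ) (hexact : LinearMap.range φ = LinearMap.ker ψ)
    (hfg : Module.Finite B₀ (Q ⧸ (π • (⊤ : Submodule B₀ Q)))) :
    Module.Finite B₀ Q :=
  statement7_general B₀ π V W Q φ ψ hsurj hexact hfg
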